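/- arXiv:1704.05397 — 2 statements merged into one kernel-verified Lean document; each statement's English description precedes it below -/
import Mathlib

section
/- Let g be a standard Gaussian vector in ℝ^p, x ∈ ℝ^p with support S, and let w ∈ ℝ^p be strictly positive, t ≥ 0. Then E[dist²(g, t·∂‖·‖_{1,w}(x))] = |S| + Σ_{i ∈ S} (t wᵢ)² + Σ_{i ∉ S} φ(t wᵢ), where φ(z) = √(2/π) ∫_z^∞ (u - z)² exp(-u²/2) du. -/
/-!
The constraint set is a product of coordinate sets and the squared distance is a sum of
coordinate terms, so the infimum splits coordinatewise. On the support the coordinate is pinned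
to `wᵢ sgn(xᵢ)`, and `E (g - t wᵢ sgn xᵢ)² = 1 + (t wᵢ)²`. Off the support the minimum over
`|z| ≤ wᵢ` is the soft-threshold residual `(|g| - t wᵢ)₊²`, whose Gaussian expectation folds,
by symmetry of the density, onto the half-line `u > t wᵢ`. Linearity of the integral and the
fact that the coordinates of the product measure are standard Gaussians finish the proof.
-/

open MeasureTheory ProbabilityTheory Real Set

theorem isLeast_sum_image_pi {ι α : Type*} [Fintype ι] {s : ι → Set α} {f : ι → α → ℝ}
    {m : ι → ℝ} (h : ∀ i, IsLeast (f i '' s i) (m i)) :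
    IsLeast ((fun z => ∑ i, f i (z i)) '' univ.pi s) (∑ i, m i) := by
  choose hmem hlow using h
  choose z hz hzm using hmem
  refine ⟨⟨z, fun i _ => hz i, Finset.sum_congr rfl fun i _ => hzm i⟩, ?_⟩
  rintro _ ⟨y, hy, rfl⟩
  exact Finset.sum_le_sum fun i _ => hlow i ⟨y i, hy i trivial, rfl⟩

theorem abs_sub_max_neg_min (g : ℝ) {c : ℝ} (hc : 0 ≤ c) :
    |g - max (-c) (min c g)| = max (|g| - c) 0 := by
  grind [abs_eq_max_neg]

theorem max_abs_sub_le_abs_sub (g : ℝ) {y c : ℝ} (hy : |y| ≤ c) : max (|g| - c) 0 ≤ |g - y| :=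
  max_le (by linarith [abs_sub_abs_le_abs_sub g y]) (abs_nonneg _)

theorem isLeast_sq_sub_mul_image_abs_le {t w : ℝ} (ht : 0 ≤ t) (hw : 0 ≤ w) (g : ℝ) :
    IsLeast ((fun z => (g - t * z) ^ 2) '' {z | |z| ≤ w}) (max (|g| - t * w) 0 ^ 2) := by
  -- for `t = 0` the witness is `0`, since `g / 0 = 0`
  have hclamp : t * max (-w) (min w (g / t)) = max (-(t * w)) (min (t * w) g) := by
    rcases ht.eq_or_lt with rfl | htpos
    · simp
    · rw [mul_max_of_nonneg _ _ ht, mul_min_of_nonneg _ _ ht, mul_div_cancel₀ g htpos.ne', mul_neg]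
  refine ⟨⟨max (-w) (min w (g / t)),
    abs_le.2 ⟨le_max_left _ _, max_le (neg_le_self hw) (min_le_left _ _)⟩, ?_⟩, ?_⟩
  · dsimp only
    rw [hclamp, ← sq_abs, abs_sub_max_neg_min g (mul_nonneg ht hw)]
  · rintro _ ⟨z, hz : |z| ≤ w, rfl⟩
    have htz : |t * z| ≤ t * w := by
      rw [abs_mul, abs_of_nonneg ht]
      exact mul_le_mul_of_nonneg_left hz ht
    dsimp only
    rw [← sq_abs (g - t * z)]
    exact pow_le_pow_left₀ (le_max_right _ _) (max_abs_sub_le_abs_sub g htz) 2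

/-- `∂(w |·|)(a)`, the `i`-th factor of `∂‖·‖_{1,w}(x)` for `w = wᵢ`, `a = xᵢ`. -/
def weightedAbsSubdiff (w a : ℝ) : Set ℝ :=
  {z | (a ≠ 0 → z = w * Real.sign a) ∧ (a = 0 → |z| ≤ w)}

theorem isLeast_sq_sub_mul_image_weightedAbsSubdiff {t w : ℝ} (ht : 0 ≤ t) (hw : 0 ≤ w)
    (a g : ℝ) :
    IsLeast ((fun z => (g - t * z) ^ 2) '' weightedAbsSubdiff w a)
      (if a ≠ 0 then (g - t * (w * Real.sign a)) ^ 2 else max (|g| - t * w) 0 ^ 2) := by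
  by_cases ha : a = 0
  · have hset : weightedAbsSubdiff w a = {z | |z| ≤ w} := by simp [weightedAbsSubdiff, ha]
    rw [if_neg (not_not.2 ha), hset]
    exact isLeast_sq_sub_mul_image_abs_le ht hw g
  · have hset : weightedAbsSubdiff w a = {w * Real.sign a} := by
      ext z
      simp [weightedAbsSubdiff, ha]
    simp [ha, hset]

theorem integrable_sq_sub_gaussianReal (μ : ℝ) (v : NNReal) (a : ℝ) :
    Integrable (fun y => (y - a) ^ 2) (gaussianReal μ v) :=
  ((memLp_id_gaussianReal 2).sub (memLp_const a)).integrable_sq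

theorem integral_sq_sub_gaussianReal (μ : ℝ) (v : NNReal) (a : ℝ) :
    ∫ y, (y - a) ^ 2 ∂gaussianReal μ v = v + (μ - a) ^ 2 := by
  have hvar : Var[fun y => y - a; gaussianReal μ v] = v :=
    (variance_sub_const (X := id) aestronglyMeasurable_id a).trans variance_id_gaussianReal
  have hmean : ∫ y, (y - a) ∂gaussianReal μ v = μ - a := by
    have hid : Integrable (fun y : ℝ => y) (gaussianReal μ v) :=
      (memLp_id_gaussianReal 1).integrable le_rfl
    rw [integral_sub hid (integrable_const a)]
    simp
  have hX : MemLp (fun y => y - a) 2 (gaussianReal μ v) :=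
    (memLp_id_gaussianReal 2).sub (memLp_const a)
  have h := variance_eq_sub hX
  rw [hvar, hmean] at h
  simp only [Pi.pow_apply] at h
  linarith

theorem integrable_sq_max_abs_sub_gaussianReal (μ : ℝ) (v : NNReal) {c : ℝ} (hc : 0 ≤ c) :
    Integrable (fun y => max (|y| - c) 0 ^ 2) (gaussianReal μ v) := by
  refine (memLp_id_gaussianReal 2).integrable_sq.mono' (by fun_prop) (ae_of_all _ fun y => ?_)
  rw [Real.norm_of_nonneg (by positivity), id, ← sq_abs y]
  exact pow_le_pow_left₀ (le_max_right _ _) (max_le (by linarith) (abs_nonneg y)) 2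

theorem integral_sq_max_abs_sub_gaussianReal {c : ℝ} (hc : 0 ≤ c) :
    ∫ y, max (|y| - c) 0 ^ 2 ∂gaussianReal 0 1 =
      √(2 / π) * ∫ u in Ioi c, (u - c) ^ 2 * exp (-u ^ 2 / 2) := by
  have hpdf : ∀ y, gaussianPDFReal 0 1 y • max (|y| - c) 0 ^ 2 =
      (√(2 * π))⁻¹ * (max (|y| - c) 0 ^ 2 * exp (-|y| ^ 2 / 2)) := fun y => by
    simp [gaussianPDFReal, sq_abs]
    ring
  have hconst : (√(2 * π))⁻¹ * 2 = √(2 / π) := by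
    rw [inv_mul_eq_div, eq_comm, sqrt_eq_iff_mul_self_eq_of_pos (by positivity),
      div_mul_div_comm, mul_self_sqrt (by positivity)]
    field_simp
  rw [integral_gaussianReal_eq_integral_smul one_ne_zero]
  simp_rw [hpdf]
  rw [integral_const_mul, integral_comp_abs (f := fun u => max (u - c) 0 ^ 2 * exp (-u ^ 2 / 2)),
    setIntegral_eq_of_subset_of_forall_sdiff_eq_zero measurableSet_Ioi (Ioi_subset_Ioi hc),
    setIntegral_congr_fun measurableSet_Ioi (g := fun u => (u - c) ^ 2 * exp (-u ^ 2 / 2)),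
    ← mul_assoc, hconst]
  · intro u (hu : c < u)
    dsimp only
    rw [max_eq_left (sub_nonneg.2 hu.le)]
  · rintro u ⟨-, hu⟩
    rw [max_eq_right (sub_nonpos.2 (not_lt.1 hu)), zero_pow two_ne_zero, zero_mul]

open Classical in
/-- expected squared distance of a standard Gaussian vector to the dilated
subdifferential `t ∂‖·‖_{1,w}(x)`:
`E dist²(g, t∂‖·‖_{1,w}(x)) = |S| + ∑_{i∈S} (t wᵢ)² + ∑_{i∉S} φ(t wᵢ)`. -/
theorem stmt7 (p : ℕ) (x w : Fin p → ℝ) (hw : ∀ i, 0 < w i) (t : ℝ) (ht : 0 ≤ t) :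
    (∫ g : Fin p → ℝ,
        sInf {d : ℝ | ∃ z : Fin p → ℝ,
          (∀ i, (x i ≠ 0 → z i = w i * Real.sign (x i)) ∧ (x i = 0 → |z i| ≤ w i)) ∧
          d = ∑ i, (g i - t * z i) ^ 2}
        ∂(Measure.pi fun _ => gaussianReal 0 1)) =
      ∑ i, (if x i ≠ 0 then 1 + (t * w i) ^ 2
        else Real.sqrt (2 / Real.pi) *
          ∫ u in Set.Ioi (t * w i), (u - t * w i) ^ 2 * Real.exp (-u ^ 2 / 2)) := by
  set m : Fin p → ℝ → ℝ := fun i y => if x i ≠ 0 then (y - t * (w i * Real.sign (x i))) ^ 2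
    else max (|y| - t * w i) 0 ^ 2 with hm
  have hmin : ∀ g : Fin p → ℝ, sInf {d : ℝ | ∃ z : Fin p → ℝ,
      (∀ i, (x i ≠ 0 → z i = w i * Real.sign (x i)) ∧ (x i = 0 → |z i| ≤ w i)) ∧
      d = ∑ i, (g i - t * z i) ^ 2} = ∑ i, m i (g i) := fun g => by
    refine (congrArg sInf ?_).trans (isLeast_sum_image_pi fun i =>
      isLeast_sq_sub_mul_image_weightedAbsSubdiff ht (hw i).le (x i) (g i)).csInf_eq
    ext d
    simp [weightedAbsSubdiff, eq_comm]
  have hint : ∀ i, Integrable (m i) (gaussianReal 0 1) := fun i => by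
    by_cases hx : x i = 0
    · simpa [hm, hx] using integrable_sq_max_abs_sub_gaussianReal 0 1 (mul_nonneg ht (hw i).le)
    · simpa [hm, hx] using integrable_sq_sub_gaussianReal 0 1 _
  have hexp : ∀ i, ∫ y, m i y ∂gaussianReal 0 1 = if x i ≠ 0 then 1 + (t * w i) ^ 2
      else √(2 / π) * ∫ u in Ioi (t * w i), (u - t * w i) ^ 2 * exp (-u ^ 2 / 2) := fun i => by
    by_cases hx : x i = 0
    · simp [hm, hx, integral_sq_max_abs_sub_gaussianReal (mul_nonneg ht (hw i).le)]
    · have hsign : Real.sign (x i) ^ 2 = 1 := by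
        rcases Real.sign_apply_eq_of_ne_zero _ hx with h | h <;> simp [h]
      simp [hm, hx, integral_sq_sub_gaussianReal, mul_pow, hsign]
  simp_rw [hmin]
  rw [integral_finsetSum _ fun i _ => integrable_comp_eval (hint i)]
  exact Finset.sum_congr rfl fun i _ =>
    (integral_comp_eval (hint i).aestronglyMeasurable).trans (hexp i)
end

section
/- Let C ⊆ ℝ^p be a nonempty compact convex set, D ∈ {0,1}^{p×L} a matrix whose columns are indicator vectors of a partition of [p], and g a standard Gaussian vector in ℝ^p. Then the function J(ν) = E[dist²(g, (Dν) ⊙ C)], defined for ν ∈ ℝ₊^L where ⊙ is the entrywise (Hadamard) product applied to each element of C, is convex and continuous on ℝ₊^L. -/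
open MeasureTheory ProbabilityTheory

/-- The standard Gaussian measure on `ℝ^p`. -/
noncomputable def stdGauss (p : ℕ) : Measure (Fin p → ℝ) :=
  Measure.pi fun _ => gaussianReal 0 1

/-- The subdifferential `C = ∂‖·‖₁(x)` of the ℓ1 norm at `x`. -/
def l1Subdiff {p : ℕ} (x : Fin p → ℝ) : Set (Fin p → ℝ) :=
  {z | ∀ i, (x i ≠ 0 → z i = Real.sign (x i)) ∧ (x i = 0 → |z i| ≤ 1)}

/-- The weight vector `Dν ∈ ℝ^p` obtained from `ν ∈ ℝ^L` via the partition indicator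
matrix `D = [1_{P_1}, …, 1_{P_L}]`. -/
def Dvec {p L : ℕ} (P : Fin L → Finset (Fin p)) (ν : Fin L → ℝ) : Fin p → ℝ :=
  fun i => ∑ j, if i ∈ P j then ν j else 0

/-- `J(ν) = E dist²(g, (Dν) ⊙ C)` with `C = ∂‖·‖₁(x)`. -/
noncomputable def Jfun {p L : ℕ} (x : Fin p → ℝ) (P : Fin L → Finset (Fin p))
    (ν : Fin L → ℝ) : ℝ :=
  ∫ g, sInf {d : ℝ | ∃ z ∈ l1Subdiff x,
    d = ∑ i, (g i - Dvec P ν i * z i) ^ 2} ∂(stdGauss p)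


section Aux
noncomputable def phiFun {p L : ℕ} (x : Fin p → ℝ) (P : Fin L → Finset (Fin p))
    (ν : Fin L → ℝ) (g : Fin p → ℝ) : ℝ :=
  ∑ i, if x i ≠ 0 then (g i - Dvec P ν i * Real.sign (x i)) ^ 2
    else (max (|g i| - Dvec P ν i) 0) ^ 2

noncomputable def zstar {p : ℕ} (x w g : Fin p → ℝ) (i : Fin p) : ℝ :=
  if x i ≠ 0 then Real.sign (x i)
  else if |g i| ≤ w i then (if w i = 0 then 0 else g i / w i) else Real.sign (g i)

lemma abs_sign_le_one (y : ℝ) : |Real.sign y| ≤ 1 := by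
  rcases lt_trichotomy y 0 with h | h | h
  · simp [Real.sign_of_neg h]
  · simp [h]
  · simp [Real.sign_of_pos h]

lemma sign_sq_eq_one {y : ℝ} (h : y ≠ 0) : Real.sign y ^ 2 = 1 := by
  rcases h.lt_or_gt with h | h
  · simp [Real.sign_of_neg h]
  · simp [Real.sign_of_pos h]

lemma zstar_mem {p : ℕ} (x w g : Fin p → ℝ) (hw : ∀ i, 0 ≤ w i) :
    zstar x w g ∈ l1Subdiff x := by
  intro i
  constructor
  · intro h; simp [zstar, h]
  · intro h
    simp only [zstar, h, ne_eq, not_true_eq_false, if_false]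
    split_ifs with h1 h2
    · simp
    · rw [abs_div, div_le_one (lt_of_le_of_ne (abs_nonneg _) (fun hc => h2 ?_))]
      · calc |g i| ≤ w i := h1
          _ ≤ |w i| := le_abs_self _
      · rcases abs_eq_zero.mp hc.symm with h3
        exact h3
    · exact abs_sign_le_one _

lemma zstar_term {p : ℕ} (x w g : Fin p → ℝ) (hw : ∀ i, 0 ≤ w i) (i : Fin p) :
    (g i - w i * zstar x w g i) ^ 2 =
      if x i ≠ 0 then (g i - w i * Real.sign (x i)) ^ 2
      else (max (|g i| - w i) 0) ^ 2 := by
  by_cases h : x i ≠ 0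
  · simp [zstar, h]
  · push_neg at h
    simp only [zstar, h, ne_eq, not_true_eq_false, if_false]
    by_cases h1 : |g i| ≤ w i
    · rw [if_pos h1, max_eq_right (by linarith)]
      by_cases h2 : w i = 0
      · have hg : g i = 0 := abs_eq_zero.mp (le_antisymm (h2 ▸ h1) (abs_nonneg _))
        simp [h2, hg]
      · rw [if_neg h2, mul_div_cancel₀ _ h2]
        simp
    · rw [if_neg h1]
      push_neg at h1
      have hg : g i ≠ 0 := by
        intro hc
        rw [hc, abs_zero] at h1
        exact absurd h1 (not_lt.mpr (hw i))
      rcases hg.lt_or_gt with hg' | hg'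
      · rw [abs_of_neg hg'] at h1
        rw [Real.sign_of_neg hg', abs_of_neg hg', max_eq_left (by linarith)]
        ring
      · rw [abs_of_pos hg'] at h1
        rw [Real.sign_of_pos hg', abs_of_pos hg', max_eq_left (by linarith)]
        ring

lemma term_lower {p : ℕ} (x w g z : Fin p → ℝ) (hw : ∀ i, 0 ≤ w i)
    (hz : z ∈ l1Subdiff x) (i : Fin p) :
    (if x i ≠ 0 then (g i - w i * Real.sign (x i)) ^ 2
      else (max (|g i| - w i) 0) ^ 2) ≤ (g i - w i * z i) ^ 2 := by
  by_cases h : x i ≠ 0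
  · rw [if_pos h, (hz i).1 h]
  · rw [if_neg h]
    push_neg at h
    have hz1 : |z i| ≤ 1 := (hz i).2 h
    have h1 : max (|g i| - w i) 0 ≤ |g i - w i * z i| := by
      apply max_le _ (abs_nonneg _)
      have h2 : |w i * z i| ≤ w i := by
        rw [abs_mul, abs_of_nonneg (hw i)]
        exact mul_le_of_le_one_right (hw i) hz1
      calc |g i| - w i ≤ |g i| - |w i * z i| := by linarith
        _ ≤ |g i - w i * z i| := abs_sub_abs_le_abs_sub _ _
    calc (max (|g i| - w i) 0) ^ 2 ≤ |g i - w i * z i| ^ 2 :=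
          pow_le_pow_left₀ (le_max_right _ _) h1 2
      _ = (g i - w i * z i) ^ 2 := sq_abs _

lemma dvec_nonneg {p L : ℕ} (P : Fin L → Finset (Fin p)) {ν : Fin L → ℝ}
    (hν : ∀ j, 0 ≤ ν j) (i : Fin p) : 0 ≤ Dvec P ν i :=
  Finset.sum_nonneg fun j _ => by split_ifs; exacts [hν j, le_refl 0]

lemma sInf_eq_phi {p L : ℕ} (x : Fin p → ℝ) (P : Fin L → Finset (Fin p))
    {ν : Fin L → ℝ} (hν : ∀ j, 0 ≤ ν j) (g : Fin p → ℝ) :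
    sInf {d : ℝ | ∃ z ∈ l1Subdiff x,
      d = ∑ i, (g i - Dvec P ν i * z i) ^ 2} = phiFun x P ν g := by
  set w := Dvec P ν with hwdef
  have hw : ∀ i, 0 ≤ w i := dvec_nonneg P hν
  have hbdd : BddBelow {d : ℝ | ∃ z ∈ l1Subdiff x, d = ∑ i, (g i - w i * z i) ^ 2} :=
    ⟨0, fun d ⟨z, _, hd⟩ => hd ▸ Finset.sum_nonneg fun i _ => sq_nonneg _⟩
  have hmem : phiFun x P ν g ∈
      {d : ℝ | ∃ z ∈ l1Subdiff x, d = ∑ i, (g i - w i * z i) ^ 2} := by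
    refine ⟨zstar x w g, zstar_mem x w g hw, ?_⟩
    exact (Finset.sum_congr rfl fun i _ => zstar_term x w g hw i).symm
  apply le_antisymm (csInf_le hbdd hmem)
  refine le_csInf ⟨_, hmem⟩ ?_
  rintro d ⟨z, hz, rfl⟩
  exact Finset.sum_le_sum fun i _ => term_lower x w g z hw hz i

instance stdGauss_prob (p : ℕ) : IsProbabilityMeasure (stdGauss p) := by
  unfold stdGauss; infer_instance

lemma integrable_sq_gaussianReal : Integrable (fun t : ℝ => t ^ 2) (gaussianReal 0 1) := by
  rw [gaussianReal_of_var_ne_zero 0 one_ne_zero,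
    integrable_withDensity_iff (measurable_gaussianPDF 0 1)
      (Filter.Eventually.of_forall fun x => ENNReal.ofReal_lt_top)]
  have h := integrable_rpow_mul_exp_neg_mul_sq (b := (2 : ℝ)⁻¹) (by norm_num)
    (s := 2) (by norm_num)
  simp_rw [Real.rpow_two] at h
  refine (h.const_mul (√(2 * Real.pi))⁻¹).congr (Filter.Eventually.of_forall fun t => ?_)
  simp only [gaussianPDF_def]
  rw [ENNReal.toReal_ofReal (gaussianPDFReal_nonneg _ _ _)]
  simp only [gaussianPDFReal, NNReal.coe_one, mul_one, sub_zero]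
  ring_nf

lemma stdGauss_map_eval {p : ℕ} (i : Fin p) :
    (stdGauss p).map (fun g => g i) = gaussianReal 0 1 := by
  ext s hs
  rw [Measure.map_apply (measurable_pi_apply i) hs]
  show (Measure.pi fun _ => gaussianReal 0 1) (Function.eval i ⁻¹' s) = (gaussianReal 0 1) s
  rw [Set.eval_preimage, Measure.pi_pi, Finset.prod_eq_single i
    (fun j _ hji => by rw [Function.update_of_ne hji]; exact measure_univ)
    (fun h => absurd (Finset.mem_univ i) h)]
  rw [Function.update_self]

lemma integrable_sq_eval {p : ℕ} (i : Fin p) :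
    Integrable (fun g : Fin p → ℝ => (g i) ^ 2) (stdGauss p) := by
  have mp : MeasurePreserving (fun g : Fin p → ℝ => g i) (stdGauss p) (gaussianReal 0 1) :=
    ⟨measurable_pi_apply i, stdGauss_map_eval i⟩
  exact (mp.integrable_comp ((measurable_id.pow_const 2).aestronglyMeasurable)).2 integrable_sq_gaussianReal

section extra
variable {p L : ℕ}

lemma sq_comb_le {θ τ A B : ℝ} (hθ : 0 ≤ θ) (hτ : 0 ≤ τ) (h : θ + τ = 1) :
    (θ * A + τ * B) ^ 2 ≤ θ * A ^ 2 + τ * B ^ 2 := by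
  nlinarith [mul_nonneg hθ hτ, sq_nonneg (A - B)]

lemma dvec_comb (P : Fin L → Finset (Fin p)) (a b : Fin L → ℝ) (θ τ : ℝ) (i : Fin p) :
    Dvec P (θ • a + τ • b) i = θ * Dvec P a i + τ * Dvec P b i := by
  simp only [Dvec, Finset.mul_sum, ← Finset.sum_add_distrib]
  refine Finset.sum_congr rfl fun j _ => ?_
  by_cases h : i ∈ P j <;> simp [h]

lemma phi_convex_ineq (x : Fin p → ℝ) (P : Fin L → Finset (Fin p)) (g : Fin p → ℝ)
    {a b : Fin L → ℝ} {θ τ : ℝ} (hθ : 0 ≤ θ) (hτ : 0 ≤ τ) (h1 : θ + τ = 1) :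
    phiFun x P (θ • a + τ • b) g ≤ θ * phiFun x P a g + τ * phiFun x P b g := by
  simp only [phiFun, Finset.mul_sum, ← Finset.sum_add_distrib]
  refine Finset.sum_le_sum fun i _ => ?_
  rw [dvec_comb]
  by_cases h : x i ≠ 0
  · simp only [if_pos h]
    have key : g i - (θ * Dvec P a i + τ * Dvec P b i) * Real.sign (x i)
        = θ * (g i - Dvec P a i * Real.sign (x i)) + τ * (g i - Dvec P b i * Real.sign (x i)) := by
      have : θ * g i + τ * g i = g i := by rw [← add_mul, h1, one_mul]
      ring_nf
      nlinarith [this]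
    rw [key]
    exact sq_comb_le hθ hτ h1
  · simp only [if_neg h]
    set A := max (|g i| - Dvec P a i) 0 with hA
    set B := max (|g i| - Dvec P b i) 0 with hB
    have hL : max (|g i| - (θ * Dvec P a i + τ * Dvec P b i)) 0 ≤ θ * A + τ * B := by
      apply max_le
      · have h2 : |g i| - (θ * Dvec P a i + τ * Dvec P b i)
            = θ * (|g i| - Dvec P a i) + τ * (|g i| - Dvec P b i) := by
          have : θ * |g i| + τ * |g i| = |g i| := by rw [← add_mul, h1, one_mul]
          nlinarith [this]
        rw [h2]
        gcongr <;> [exact le_max_left _ _; exact le_max_left _ _]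
      · positivity
    calc (max (|g i| - (θ * Dvec P a i + τ * Dvec P b i)) 0) ^ 2
        ≤ (θ * A + τ * B) ^ 2 := pow_le_pow_left₀ (le_max_right _ _) hL 2
      _ ≤ θ * A ^ 2 + τ * B ^ 2 := sq_comb_le hθ hτ h1

lemma phi_nonneg (x : Fin p → ℝ) (P : Fin L → Finset (Fin p)) (ν g) :
    0 ≤ phiFun x P ν g :=
  Finset.sum_nonneg fun i _ => by split_ifs <;> positivity

lemma phi_measurable (x : Fin p → ℝ) (P : Fin L → Finset (Fin p)) (ν : Fin L → ℝ) :
    Measurable (phiFun x P ν) := by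
  apply Finset.measurable_sum
  intro i _
  by_cases h : x i ≠ 0
  · simp only [if_pos h]
    exact ((measurable_pi_apply i).sub measurable_const).pow_const 2
  · simp only [if_neg h]
    exact (((measurable_pi_apply i).abs.sub measurable_const).max measurable_const).pow_const 2

lemma phi_continuous (x : Fin p → ℝ) (P : Fin L → Finset (Fin p)) (g : Fin p → ℝ) :
    Continuous (fun ν : Fin L → ℝ => phiFun x P ν g) := by
  apply continuous_finset_sum
  intro i _
  have hd : Continuous (fun ν : Fin L → ℝ => Dvec P ν i) := by
    apply continuous_finset_sum
    intro j _
    by_cases h : i ∈ P j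
    · simpa [h] using continuous_apply j
    · simpa [h] using continuous_const
  by_cases h : x i ≠ 0
  · simp only [if_pos h]
    exact ((continuous_const.sub (hd.mul continuous_const)).pow 2)
  · simp only [if_neg h]
    exact ((continuous_const.sub hd).max continuous_const).pow 2

lemma dvec_le_sum (P : Fin L → Finset (Fin p)) {ν : Fin L → ℝ}
    (hν : ∀ j, 0 ≤ ν j) (i : Fin p) : Dvec P ν i ≤ ∑ j, ν j :=
  Finset.sum_le_sum fun j _ => by split_ifs; exacts [le_refl _, hν j]

lemma phi_le_bound (x : Fin p → ℝ) (P : Fin L → Finset (Fin p)) {ν : Fin L → ℝ} {B : ℝ}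
    (hν : ∀ j, 0 ≤ ν j) (hB : ∀ i, Dvec P ν i ≤ B) (hB0 : 0 ≤ B) (g : Fin p → ℝ) :
    phiFun x P ν g ≤ ∑ i, (2 * (g i) ^ 2 + 2 * B ^ 2) := by
  refine Finset.sum_le_sum fun i _ => ?_
  have hw0 : 0 ≤ Dvec P ν i := dvec_nonneg P hν i
  have hwB : Dvec P ν i ≤ B := hB i
  by_cases h : x i ≠ 0
  · simp only [if_pos h]
    have hs : Real.sign (x i) ^ 2 = 1 := sign_sq_eq_one h
    nlinarith [sq_nonneg (g i + Dvec P ν i * Real.sign (x i)), sq_nonneg (g i), sq_nonneg (Dvec P ν i)]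
  · simp only [if_neg h]
    have h1 : max (|g i| - Dvec P ν i) 0 ≤ |g i| := max_le (by linarith) (abs_nonneg _)
    calc (max (|g i| - Dvec P ν i) 0) ^ 2 ≤ |g i| ^ 2 :=
          pow_le_pow_left₀ (le_max_right _ _) h1 2
      _ = (g i) ^ 2 := sq_abs _
      _ ≤ 2 * (g i) ^ 2 + 2 * B ^ 2 := by nlinarith [sq_nonneg (g i)]

lemma bound_integrable (B : ℝ) :
    Integrable (fun g : Fin p → ℝ => ∑ i, (2 * (g i) ^ 2 + 2 * B ^ 2)) (stdGauss p) := by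
  apply integrable_finset_sum
  intro i _
  exact ((integrable_sq_eval i).const_mul 2).add (integrable_const _)

lemma phi_integrable (x : Fin p → ℝ) (P : Fin L → Finset (Fin p)) {ν : Fin L → ℝ}
    (hν : ∀ j, 0 ≤ ν j) : Integrable (phiFun x P ν) (stdGauss p) := by
  set B := ∑ j, ν j with hBdef
  have hB0 : 0 ≤ B := Finset.sum_nonneg fun j _ => hν j
  refine Integrable.mono' (bound_integrable B) (phi_measurable x P ν).aestronglyMeasurable
    (Filter.Eventually.of_forall fun g => ?_)
  rw [Real.norm_eq_abs, abs_of_nonneg (phi_nonneg x P ν g)]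
  exact phi_le_bound x P hν (dvec_le_sum P hν) hB0 g

lemma Jfun_eq_phi (x : Fin p → ℝ) (P : Fin L → Finset (Fin p)) {ν : Fin L → ℝ}
    (hν : ∀ j, 0 ≤ ν j) :
    Jfun x P ν = ∫ g, phiFun x P ν g ∂(stdGauss p) :=
  integral_congr_ae (Filter.Eventually.of_forall fun g => sInf_eq_phi x P hν g)

end extra

end Aux

/-- with `C = ∂‖·‖₁(x)` (nonempty compact convex, `x` with nonempty
support) and `D` the indicator matrix of a partition of `[p]`, the function
`J(ν) = E dist²(g, (Dν) ⊙ C)` is convex and continuous on `ℝ₊^L`. -/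
theorem stmt13 (p L : ℕ) (x : Fin p → ℝ) (hx : ∃ i, x i ≠ 0)
    (P : Fin L → Finset (Fin p))
    (hdisj : ∀ a b, a ≠ b → Disjoint (P a) (P b))
    (hcover : ∀ i : Fin p, ∃ j, i ∈ P j) :
    ConvexOn ℝ {ν : Fin L → ℝ | ∀ j, 0 ≤ ν j} (Jfun x P) ∧
      ContinuousOn (Jfun x P) {ν : Fin L → ℝ | ∀ j, 0 ≤ ν j} := by
  set s : Set (Fin L → ℝ) := {ν | ∀ j, 0 ≤ ν j} with hs
  have hconv : Convex ℝ s := by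
    intro a ha b hb θ τ hθ hτ h1 j
    simp only [Pi.add_apply, Pi.smul_apply, smul_eq_mul]
    exact add_nonneg (mul_nonneg hθ (ha j)) (mul_nonneg hτ (hb j))
  constructor
  · refine ⟨hconv, ?_⟩
    intro a ha b hb θ τ hθ hτ h1
    have ha' : ∀ j, 0 ≤ a j := ha
    have hb' : ∀ j, 0 ≤ b j := hb
    have hab : ∀ j, 0 ≤ (θ • a + τ • b) j := fun j => by
      simp only [Pi.add_apply, Pi.smul_apply, smul_eq_mul]
      exact add_nonneg (mul_nonneg hθ (ha' j)) (mul_nonneg hτ (hb' j))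
    rw [smul_eq_mul, smul_eq_mul, Jfun_eq_phi x P ha', Jfun_eq_phi x P hb',
      Jfun_eq_phi x P hab]
    have hia := phi_integrable x P ha' (p := p)
    have hib := phi_integrable x P hb' (p := p)
    calc ∫ g, phiFun x P (θ • a + τ • b) g ∂(stdGauss p)
        ≤ ∫ g, (θ * phiFun x P a g + τ * phiFun x P b g) ∂(stdGauss p) := by
          exact integral_mono_of_nonneg
            (Filter.Eventually.of_forall fun g => phi_nonneg _ _ _ _)
            ((hia.const_mul θ).add (hib.const_mul τ))
            (Filter.Eventually.of_forall fun g => phi_convex_ineq x P g hθ hτ h1)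
      _ = θ * ∫ g, phiFun x P a g ∂(stdGauss p)
            + τ * ∫ g, phiFun x P b g ∂(stdGauss p) := by
          rw [integral_add (hia.const_mul θ) (hib.const_mul τ), integral_const_mul, integral_const_mul]
  · intro ν₀ hν₀
    have hν₀' : ∀ j, 0 ≤ ν₀ j := hν₀
    set B : ℝ := (∑ j, |ν₀ j|) + 1 with hBdef
    have hB1 : (1 : ℝ) ≤ B := le_add_of_nonneg_left (Finset.sum_nonneg fun j _ => abs_nonneg _)
    set C : ℝ := L * B with hCdef
    have hC0 : 0 ≤ C := mul_nonneg (Nat.cast_nonneg L) (by linarith)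
    have key : ContinuousWithinAt (fun ν => ∫ g, phiFun x P ν g ∂(stdGauss p)) s ν₀ := by
      apply continuousWithinAt_of_dominated
        (bound := fun g : Fin p → ℝ => ∑ i, (2 * (g i) ^ 2 + 2 * C ^ 2))
      · exact Filter.Eventually.of_forall fun ν => (phi_measurable x P ν).aestronglyMeasurable
      · have hball : ∀ᶠ ν in nhdsWithin ν₀ s, ν ∈ Metric.ball ν₀ 1 :=
          mem_nhdsWithin_of_mem_nhds (Metric.ball_mem_nhds ν₀ one_pos)
        filter_upwards [self_mem_nhdsWithin, hball] with ν hνs hνball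
        have hνs' : ∀ j, 0 ≤ ν j := hνs
        refine Filter.Eventually.of_forall fun g => ?_
        have hd : ∀ i, Dvec P ν i ≤ C := by
          intro i
          refine (dvec_le_sum P hνs' i).trans ?_
          have hj : ∀ j, ν j ≤ B := by
            intro j
            have h2 : |ν j - ν₀ j| ≤ dist ν ν₀ := by
              rw [← Real.dist_eq]; exact dist_le_pi_dist ν ν₀ j
            have h3 : dist ν ν₀ < 1 := Metric.mem_ball.mp hνball
            have h5 := abs_sub_abs_le_abs_sub (ν j) (ν₀ j)
            have h6 : |ν₀ j| ≤ ∑ j', |ν₀ j'| :=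
              Finset.single_le_sum (f := fun j' => |ν₀ j'|) (fun j' _ => abs_nonneg _) (Finset.mem_univ j)
            have h7 : ν j ≤ |ν j| := le_abs_self _
            rw [hBdef]; linarith
          calc ∑ j, ν j ≤ ∑ _j : Fin L, B := Finset.sum_le_sum fun j _ => hj j
            _ = L * B := by
                rw [Finset.sum_const, Finset.card_univ, Fintype.card_fin, nsmul_eq_mul]
        rw [Real.norm_eq_abs, abs_of_nonneg (phi_nonneg x P ν g)]
        exact phi_le_bound x P hνs' hd hC0 g
      · exact bound_integrable C
      · exact Filter.Eventually.of_forall fun g =>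
          ((phi_continuous x P g).continuousAt).continuousWithinAt
    exact key.congr (fun ν hν => Jfun_eq_phi x P hν) (Jfun_eq_phi x P hν₀')
end
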